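/- arXiv:1511.03340 — 3 statements merged into one kernel-verified Lean document; each statement's English description precedes it below -/
import Mathlib

section
/- For every l ≥ 1 and k ≥ 0, the map Δ^l from the space of homogeneous polynomials of degree k in two variables to the space of homogeneous polynomials of degree k − 2l (interpreted as 0 if k < 2l) is surjective; consequently the space of homogeneous l-harmonic polynomials of degree k has dimension min(k+1, 2l). -/
open MvPolynomial

/-- The Laplacian on real polynomials in two variables, as a linear map. -/
noncomputable def lapL : MvPolynomial (Fin 2) ℝ →ₗ[ℝ] MvPolynomial (Fin 2) ℝ :=
  ((pderiv 0).toLinearMap ∘ₗ (pderiv 0).toLinearMap) +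
  ((pderiv 1).toLinearMap ∘ₗ (pderiv 1).toLinearMap)

/-- `f_k = Re((x+iy)^k)` as a polynomial. -/
noncomputable def fkPoly (k : ℕ) : MvPolynomial (Fin 2) ℝ :=
  ∑ j ∈ Finset.range (k+1),
    MvPolynomial.C (if j % 2 = 0 then ((-1:ℝ)^(j/2)) * (k.choose j : ℝ) else 0) *
      X 0 ^ (k - j) * X 1 ^ j

/-- `g_k = Im((x+iy)^k)` as a polynomial. -/
noncomputable def gkPoly (k : ℕ) : MvPolynomial (Fin 2) ℝ :=
  ∑ j ∈ Finset.range (k+1),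
    MvPolynomial.C (if j % 2 = 1 then ((-1:ℝ)^(j/2)) * (k.choose j : ℝ) else 0) *
      X 0 ^ (k - j) * X 1 ^ j

/-- Composition of a polynomial with the linear map given by a matrix: `(p ∘ M)(v) = p (M v)`. -/
noncomputable def matComp (M : Matrix (Fin 2) (Fin 2) ℝ) (p : MvPolynomial (Fin 2) ℝ) :
    MvPolynomial (Fin 2) ℝ :=
  aeval (fun i => MvPolynomial.C (M i 0) * X 0 + MvPolynomial.C (M i 1) * X 1) p

/-! Since `Δ (x^(a+2) y^b) = (a+2)(a+1) x^a y^b + b(b-1) x^(a+2) y^(b-2)`, induction on the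
exponent of `y` puts every monomial of degree `n` in the image under `Δ` of the homogeneous
polynomials of degree `n + 2`. Hence `Δ^l` maps degree `k` onto degree `k - 2l` when `2l ≤ k`,
and rank–nullity gives a kernel of dimension `(k + 1) - (k - 2l + 1) = 2l`. When `k < 2l`,
every homogeneous polynomial of degree `k` is killed by `Δ^l`, as `Δ` kills degrees `0` and `1`. -/

theorem finrank_homogeneousSubmodule {σ K : Type*} [Fintype σ] [Field K] (n : ℕ) :
    Module.finrank K (homogeneousSubmodule σ K n) = (Fintype.card σ + n - 1).choose n := by
  classical
  have hdeg : {d : σ →₀ ℕ | d.degree = n} =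
      ((Finset.univ : Finset σ).finsuppAntidiag n : Set _) := by
    ext d; simp [Finset.mem_finsuppAntidiag, Finsupp.degree_eq_sum]
  rw [homogeneousSubmodule_eq_finsupp_supported, hdeg,
    (AddMonoidAlgebra.supportedEquivFinsupp _).finrank_eq, Module.finrank_finsupp_self]
  simp [Finset.card_finsuppAntidiag_nat_eq_choose]

theorem finrank_map_add_finrank_inf_ker {K V W : Type*} [DivisionRing K] [AddCommGroup V]
    [Module K V] [AddCommGroup W] [Module K W] (f : V →ₗ[K] W) (p : Submodule K V)
    [FiniteDimensional K p] :
    Module.finrank K (p.map f) + Module.finrank K ↥(p ⊓ LinearMap.ker f) = Module.finrank K p := by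
  rw [← LinearMap.range_domRestrict, ← Submodule.map_comap_subtype,
    Submodule.finrank_map_subtype_eq, ← LinearMap.ker_domRestrict,
    LinearMap.finrank_range_add_finrank_ker]

instance {σ R : Type*} [Finite σ] [CommSemiring R] (n : ℕ) :
    Module.Finite R (homogeneousSubmodule σ R n) :=
  Module.Finite.iff_fg.mpr (homogeneousSubmodule_fg σ R n)

local notation "𝓗" => homogeneousSubmodule (Fin 2) ℝ

theorem finrank_homogeneousSubmodule_fin_two (n : ℕ) : Module.finrank ℝ (𝓗 n) = n + 1 := by
  rw [finrank_homogeneousSubmodule, Fintype.card_fin, show 2 + n - 1 = n + 1 by omega,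
    Nat.choose_succ_self_right]

/-- For `a ≤ 1` the truncated exponent `a - 2` is harmless, its coefficient `a (a - 1)` being
zero (likewise for `b`). -/
theorem lapL_X_pow_mul_X_pow (a b : ℕ) :
    lapL (X 0 ^ a * X 1 ^ b) = ((a : ℝ) * (a - 1)) • (X 0 ^ (a - 2) * X 1 ^ b) +
      ((b : ℝ) * (b - 1)) • (X 0 ^ a * X 1 ^ (b - 2)) := by
  simp only [lapL, LinearMap.add_apply, LinearMap.comp_apply, Derivation.coeFn_coe,
    Derivation.leibniz, Derivation.leibniz_pow, pderiv_X]
  rcases a with _ | _ | a <;> rcases b with _ | _ | b <;> simp [smul_eq_C_mul] <;> ring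

theorem MvPolynomial.IsHomogeneous.lapL {p : MvPolynomial (Fin 2) ℝ} {n : ℕ}
    (hp : p.IsHomogeneous n) : (lapL p).IsHomogeneous (n - 2) :=
  hp.pderiv.pderiv.add hp.pderiv.pderiv

theorem lapL_eq_zero_of_isHomogeneous {p : MvPolynomial (Fin 2) ℝ} {n : ℕ}
    (hp : p.IsHomogeneous n) (hn : n ≤ 1) : lapL p = 0 := by
  have hconst : ∀ i j : Fin 2, pderiv i (pderiv j p) = 0 := fun i j => by
    have h0 : (pderiv j p).IsHomogeneous 0 := Nat.sub_eq_zero_of_le hn ▸ hp.pderiv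
    rw [← totalDegree_zero_iff_isHomogeneous, totalDegree_eq_zero_iff_eq_C] at h0
    rw [h0, pderiv_C]
  simp [lapL, hconst]

theorem lapL_pow_eq_zero_of_isHomogeneous {l n : ℕ} {p : MvPolynomial (Fin 2) ℝ}
    (hp : p.IsHomogeneous n) (hn : n < 2 * l) : (lapL ^ l) p = 0 := by
  induction l generalizing p n with
  | zero => omega
  | succ l ih =>
    rw [pow_succ, Module.End.mul_apply]
    rcases le_or_gt n 1 with hn1 | hn1
    · rw [lapL_eq_zero_of_isHomogeneous hp hn1, map_zero]
    · exact ih hp.lapL (by omega)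

theorem X_pow_mul_X_pow_mem_map_lapL (a b : ℕ) :
    X 0 ^ a * X 1 ^ b ∈ (𝓗 (a + b + 2)).map lapL := by
  induction b using Nat.strong_induction_on generalizing a with
  | _ b ih =>
  set M := (𝓗 (a + b + 2)).map lapL
  have hlap : lapL (X 0 ^ (a + 2) * X 1 ^ b) ∈ M :=
    Submodule.mem_map_of_mem <| by
      simpa [show a + 2 + b = a + b + 2 by omega] using
        (isHomogeneous_X_pow (R := ℝ) (0 : Fin 2) (a + 2)).mul (isHomogeneous_X_pow 1 b)
  have hrest : ((b : ℝ) * (b - 1)) • (X 0 ^ (a + 2) * X 1 ^ (b - 2)) ∈ M := by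
    rcases lt_or_ge b 2 with hb | hb
    · interval_cases b <;> simp
    · refine M.smul_mem _ ?_
      simpa [M, show a + 2 + (b - 2) + 2 = a + b + 2 by omega] using ih (b - 2) (by omega) (a + 2)
  rw [lapL_X_pow_mul_X_pow, Nat.add_sub_cancel, M.add_mem_iff_left hrest] at hlap
  have hc : ((a + 2 : ℕ) : ℝ) * ((a + 2 : ℕ) - 1) ≠ 0 := by push_cast; ring_nf; positivity
  exact (M.smul_mem_iff hc).mp hlap

theorem homogeneousSubmodule_le_map_lapL (n : ℕ) : 𝓗 n ≤ (𝓗 (n + 2)).map lapL := by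
  rw [homogeneousSubmodule_eq_finsupp_supported, AddMonoidAlgebra.supported_eq_span_single,
    Submodule.span_le]
  rintro _ ⟨d, hd : d.degree = n, rfl⟩
  rw [Finsupp.degree_eq_sum, Fin.sum_univ_two] at hd
  have hmono : AddMonoidAlgebra.single d (1 : ℝ) = X 0 ^ d 0 * X 1 ^ d 1 := by
    rw [single_eq_monomial, monomial_eq, Finsupp.prod_fintype _ _ (by simp), Fin.prod_univ_two,
      C_1, one_mul]
  simp only [SetLike.mem_coe, hmono, ← hd]
  exact X_pow_mul_X_pow_mem_map_lapL (d 0) (d 1)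

theorem map_lapL_homogeneousSubmodule (n : ℕ) : (𝓗 (n + 2)).map lapL = 𝓗 n :=
  le_antisymm (Submodule.map_le_iff_le_comap.mpr fun _ hp => hp.lapL)
    (homogeneousSubmodule_le_map_lapL n)

theorem map_lapL_pow_homogeneousSubmodule (n l : ℕ) : (𝓗 (n + 2 * l)).map (lapL ^ l) = 𝓗 n := by
  induction l generalizing n with
  | zero => rw [pow_zero, Module.End.one_eq_id, Submodule.map_id, mul_zero, add_zero]
  | succ l ih =>
    rw [pow_succ, Module.End.mul_eq_comp, Submodule.map_comp,
      show n + 2 * (l + 1) = n + 2 * l + 2 by ring, map_lapL_homogeneousSubmodule, ih]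

theorem lap_pow_surjective_and_dim_general (l k : ℕ) :
    (∀ q : MvPolynomial (Fin 2) ℝ, q.IsHomogeneous (k - 2 * l) → 2 * l ≤ k →
      ∃ p : MvPolynomial (Fin 2) ℝ, p.IsHomogeneous k ∧ (lapL ^ l) p = q) ∧
    Module.finrank ℝ
      ↥(MvPolynomial.homogeneousSubmodule (Fin 2) ℝ k ⊓ LinearMap.ker (lapL ^ l)) =
        min (k + 1) (2 * l) := by
  have hmap : 2 * l ≤ k → (𝓗 k).map (lapL ^ l) = 𝓗 (k - 2 * l) := fun hlk => by
    rw [← map_lapL_pow_homogeneousSubmodule (k - 2 * l) l, Nat.sub_add_cancel hlk]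
  refine ⟨fun q hq hlk => ?_, ?_⟩
  · obtain ⟨p, hp, rfl⟩ : q ∈ (𝓗 k).map (lapL ^ l) := hmap hlk ▸ hq
    exact ⟨p, hp, rfl⟩
  · rcases le_or_gt (2 * l) k with hlk | hkl
    · have hrank := finrank_map_add_finrank_inf_ker (lapL ^ l) (𝓗 k)
      rw [hmap hlk, finrank_homogeneousSubmodule_fin_two,
        finrank_homogeneousSubmodule_fin_two] at hrank
      omega
    · have hker : 𝓗 k ≤ LinearMap.ker (lapL ^ l) := fun _ hp =>
        lapL_pow_eq_zero_of_isHomogeneous hp hkl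
      rw [inf_eq_left.mpr hker, finrank_homogeneousSubmodule_fin_two]
      omega

/-- `Δ^l` maps homogeneous polynomials of degree `k` onto homogeneous polynomials of
degree `k - 2l`, and the space of homogeneous `l`-harmonic polynomials of degree `k`
has dimension `min (k+1) (2l)`. -/
theorem lap_pow_surjective_and_dim (l k : ℕ) (hl : 1 ≤ l) :
    (∀ q : MvPolynomial (Fin 2) ℝ, q.IsHomogeneous (k - 2 * l) → 2 * l ≤ k →
      ∃ p : MvPolynomial (Fin 2) ℝ, p.IsHomogeneous k ∧ (lapL ^ l) p = q) ∧
    Module.finrank ℝ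
      ↥(MvPolynomial.homogeneousSubmodule (Fin 2) ℝ k ⊓ LinearMap.ker (lapL ^ l)) =
        min (k + 1) (2 * l) :=
  lap_pow_surjective_and_dim_general l k
end

section
/- f₃(x,y) = Re((x+iy)³) = x³ − 3xy² satisfies m³ ⊆ m·J_{f₃} + m⁴, where m is the maximal ideal of germs vanishing at 0 in ℝ² and J_{f₃} is the Jacobian ideal of f₃; consequently the partial derivatives 3x²−3y² and −6xy generate an ideal J with m³ ⊆ m·J + m⁴ in the polynomial ring ℝ[x,y]. -/
open MvPolynomial

/-- For `f₃ = x³ − 3xy²`, the Jacobian ideal `J = ⟨3x²−3y², −6xy⟩` and the maximal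
ideal `m = ⟨x,y⟩` satisfy `m³ ⊆ m·J + m⁴` in `ℝ[x,y]`. -/
theorem f3_jacobian_ideal_inclusion
    (m J : Ideal (MvPolynomial (Fin 2) ℝ))
    (hm : m = Ideal.span {X 0, X 1})
    (hJ : J = Ideal.span
      {MvPolynomial.C 3 * X 0 ^ 2 - MvPolynomial.C 3 * X 1 ^ 2,
       -(MvPolynomial.C 6) * X 0 * X 1}) :
    m ^ 3 ≤ m * J + m ^ 4 := by
  set g1 : MvPolynomial (Fin 2) ℝ :=
    MvPolynomial.C 3 * X 0 ^ 2 - MvPolynomial.C 3 * X 1 ^ 2 with hg1def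
  set g2 : MvPolynomial (Fin 2) ℝ := -(MvPolynomial.C 6) * X 0 * X 1 with hg2def
  have hx : (X 0 : MvPolynomial (Fin 2) ℝ) ∈ m := hm ▸ Ideal.subset_span (by simp)
  have hy : (X 1 : MvPolynomial (Fin 2) ℝ) ∈ m := hm ▸ Ideal.subset_span (by simp)
  have hg1 : g1 ∈ J := hJ ▸ Ideal.subset_span (by simp)
  have hg2 : g2 ∈ J := hJ ▸ Ideal.subset_span (by simp)
  have h6 : (MvPolynomial.C (1/6 : ℝ) : MvPolynomial (Fin 2) ℝ) * MvPolynomial.C 6 = 1 := by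
    rw [← MvPolynomial.C_mul]; norm_num
  have h3 : (MvPolynomial.C (1/3 : ℝ) : MvPolynomial (Fin 2) ℝ) * MvPolynomial.C 3 = 1 := by
    rw [← MvPolynomial.C_mul]; norm_num
  have hA : X 1 * g2 ∈ m * J := Ideal.mul_mem_mul hy hg2
  have hB : X 0 * g2 ∈ m * J := Ideal.mul_mem_mul hx hg2
  have hC : X 0 * g1 ∈ m * J := Ideal.mul_mem_mul hx hg1
  have hD : X 1 * g1 ∈ m * J := Ideal.mul_mem_mul hy hg1
  have hxy2 : X 0 * X 1 ^ 2 ∈ m * J := by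
    have e : X 0 * X 1 ^ 2 = -(MvPolynomial.C ((1/6) : ℝ)) * (X 1 * g2) := by
      rw [hg2def]; linear_combination (-(X 0 * X 1 ^ 2)) * h6
    rw [e]; exact Ideal.mul_mem_left _ _ hA
  have hx2y : X 0 ^ 2 * X 1 ∈ m * J := by
    have e : X 0 ^ 2 * X 1 = -(MvPolynomial.C ((1/6) : ℝ)) * (X 0 * g2) := by
      rw [hg2def]; linear_combination (-(X 0 ^ 2 * X 1)) * h6
    rw [e]; exact Ideal.mul_mem_left _ _ hB
  have hx3 : X 0 ^ 3 ∈ m * J := by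
    have e : (X 0 : MvPolynomial (Fin 2) ℝ) ^ 3 =
        MvPolynomial.C (1/3 : ℝ) * (X 0 * g1) + X 0 * X 1 ^ 2 := by
      rw [hg1def]; linear_combination (X 0 * X 1 ^ 2 - X 0 ^ 3) * h3
    rw [e]; exact add_mem (Ideal.mul_mem_left _ _ hC) hxy2
  have hy3 : X 1 ^ 3 ∈ m * J := by
    have e : (X 1 : MvPolynomial (Fin 2) ℝ) ^ 3 =
        X 0 ^ 2 * X 1 - MvPolynomial.C (1/3 : ℝ) * (X 1 * g1) := by
      rw [hg1def]; linear_combination (X 0 ^ 2 * X 1 - X 1 ^ 3) * h3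
    rw [e]; exact sub_mem hx2y (Ideal.mul_mem_left _ _ hD)
  refine le_trans ?_ (le_sup_left : m * J ≤ m * J + m ^ 4)
  rw [hm, pow_succ, pow_two, Ideal.span_mul_span, Ideal.span_mul_span, Ideal.span_le]
  rintro p hp
  simp only [Set.mem_mul, Set.mem_iUnion, Set.mem_singleton_iff, Set.mem_insert_iff] at hp
  obtain ⟨q, ⟨s, hs, t, ht, rfl⟩, r, hr, rfl⟩ := hp
  rcases hs with rfl | rfl <;> rcases ht with rfl | rfl <;> rcases hr with rfl | rfl <;>
    simp only [SetLike.mem_coe] <;> rw [← hm]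
  · rw [show (X 0 : MvPolynomial (Fin 2) ℝ) * X 0 * X 0 = X 0 ^ 3 by ring]; exact hx3
  · rw [show (X 0 : MvPolynomial (Fin 2) ℝ) * X 0 * X 1 = X 0 ^ 2 * X 1 by ring]; exact hx2y
  · rw [show (X 0 : MvPolynomial (Fin 2) ℝ) * X 1 * X 0 = X 0 ^ 2 * X 1 by ring]; exact hx2y
  · rw [show (X 0 : MvPolynomial (Fin 2) ℝ) * X 1 * X 1 = X 0 * X 1 ^ 2 by ring]; exact hxy2
  · rw [show (X 1 : MvPolynomial (Fin 2) ℝ) * X 0 * X 0 = X 0 ^ 2 * X 1 by ring]; exact hx2y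
  · rw [show (X 1 : MvPolynomial (Fin 2) ℝ) * X 0 * X 1 = X 0 * X 1 ^ 2 by ring]; exact hxy2
  · rw [show (X 1 : MvPolynomial (Fin 2) ℝ) * X 1 * X 0 = X 0 * X 1 ^ 2 by ring]; exact hxy2
  · rw [show (X 1 : MvPolynomial (Fin 2) ℝ) * X 1 * X 1 = X 1 ^ 3 by ring]; exact hy3
end

section
/- For f₄ = x⁴ − 6x²y² + y⁴, with the ideal m = ⟨x,y⟩ and Jacobian ideal J = ⟨4x³ − 12xy², −12x²y + 4y³⟩ in ℝ[x,y], the inclusion m⁵ ⊆ m·J + m⁶ holds, i.e. every monomial of degree 5 in x,y lies in m·J + m⁶. -/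
open MvPolynomial

/-!
In fact `m⁵ ⊆ m·J`. Since `m⁵` is spanned by the monomials `xⁱy⁵⁻ⁱ`, it suffices to treat these,
and each `32·xⁱy⁵⁻ⁱ` is an explicit integer combination of the six quintics `x²g, xyg, y²g`,
`g` running over the two generators of `J`.
-/

namespace Ideal

variable {R : Type*} [CommRing R] {x y : R} {I : Ideal R}

theorem mul_mem_of_mem_colon_pair {r s : R} (hr : r ∈ I.colon {x, y}) (hs : s ∈ span {x, y}) :
    r * s ∈ I := by
  obtain ⟨a, b, rfl⟩ := mem_span_pair.1 hs
  have hrx : r * x ∈ I := Submodule.mem_colon.1 hr x (by simp)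
  have hry : r * y ∈ I := Submodule.mem_colon.1 hr y (by simp)
  rw [mul_add, mul_left_comm, mul_left_comm r]
  exact add_mem (I.mul_mem_left a hrx) (I.mul_mem_left b hry)

theorem span_pair_pow_le_of_forall_mem (n : ℕ) (h : ∀ i ≤ n, x ^ i * y ^ (n - i) ∈ I) :
    span {x, y} ^ n ≤ I := by
  induction n generalizing I with
  | zero =>
    rw [(eq_top_iff_one I).2 (by simpa using h 0 le_rfl)]
    exact le_top
  | succ n ih =>
    have hcolon : span {x, y} ^ n ≤ I.colon {x, y} := by
      refine ih fun i hi => Submodule.mem_colon.2 ?_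
      rintro s (rfl | rfl)
      · convert h (i + 1) (by omega) using 1
        rw [smul_eq_mul, Nat.add_sub_add_right]
        ring
      · convert h i (by omega) using 1
        rw [smul_eq_mul, show n + 1 - i = n - i + 1 by omega]
        ring
    rw [pow_succ]
    exact mul_le.2 fun r hr s hs => mul_mem_of_mem_colon_pair (hcolon hr) hs

end Ideal

section

open Ideal

variable {R : Type*} [CommRing R] (x y : R)

theorem add_mul_mem_span_pair_mul_span_pair (g h a b c d : R) :
    (a * x + b * y) * g + (c * x + d * y) * h ∈ span {x, y} * span {g, h} :=
  add_mem (mul_mem_mul (mem_span_pair.2 ⟨a, b, rfl⟩) (subset_span (by simp)))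
    (mul_mem_mul (mem_span_pair.2 ⟨c, d, rfl⟩) (subset_span (by simp)))

theorem monomial_mem_span_pair_mul_jacobian (h2 : IsUnit (2 : R)) (i : ℕ) (hi : i ≤ 5) :
    x ^ i * y ^ (5 - i) ∈
      span {x, y} * span {4 * x ^ 3 - 12 * x * y ^ 2, -12 * x ^ 2 * y + 4 * y ^ 3} := by
  rw [← unit_mul_mem_iff_mem _ (h2.pow 5)]
  interval_cases i
  · convert add_mul_mem_span_pair_mul_span_pair x y _ _ (-9 * y) 0 (-3 * x) (8 * y) using 1
    ring
  · convert add_mul_mem_span_pair_mul_span_pair x y _ _ 0 (-3 * y) 0 (-x) using 1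
    ring
  · convert add_mul_mem_span_pair_mul_span_pair x y _ _ (-3 * y) 0 (-x) 0 using 1
    ring
  · convert add_mul_mem_span_pair_mul_span_pair x y _ _ 0 (-y) 0 (-3 * x) using 1
    ring
  · convert add_mul_mem_span_pair_mul_span_pair x y _ _ (-y) 0 (-3 * x) 0 using 1
    ring
  · convert add_mul_mem_span_pair_mul_span_pair x y _ _ (8 * x) (-3 * y) (-9 * y) 0 using 1
    ring

end

/-- For `f₄ = x⁴ − 6x²y² + y⁴`, with `m = ⟨x,y⟩` and Jacobian ideal
`J = ⟨4x³−12xy², −12x²y+4y³⟩`, one has `m⁵ ⊆ m·J + m⁶` in `ℝ[x,y]`. -/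
theorem f4_jacobian_ideal_inclusion
    (m J : Ideal (MvPolynomial (Fin 2) ℝ))
    (hm : m = Ideal.span {X 0, X 1})
    (hJ : J = Ideal.span
      {MvPolynomial.C 4 * X 0 ^ 3 - MvPolynomial.C 12 * X 0 * X 1 ^ 2,
       -(MvPolynomial.C 12) * X 0 ^ 2 * X 1 + MvPolynomial.C 4 * X 1 ^ 3}) :
    m ^ 5 ≤ m * J + m ^ 6 := by
  subst hm hJ
  have h2 : IsUnit (2 : MvPolynomial (Fin 2) ℝ) := by
    simpa only [map_ofNat] using (isUnit_iff_ne_zero.2 (two_ne_zero : (2 : ℝ) ≠ 0)).map C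
  simp only [map_ofNat]
  exact le_trans (Ideal.span_pair_pow_le_of_forall_mem 5
    (monomial_mem_span_pair_mul_jacobian _ _ h2)) le_sup_left
end
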